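/- arXiv:1210.5392 — 4 statements merged into one kernel-verified Lean document; each statement's English description precedes it below -/
import Mathlib

section
/- Let ψ(x) = (1 + x²)^{s/2} with s ∈ ℕ and σ > 0. For bounded continuous f : [0,∞) → ℂ and t ≥ 0, define P_t f(x) := ∫_ℝ f((√x + σ√t y)²) (2π)^{-1/2} e^{−y²/2} dy. Then (P_t)_{t≥0} satisfies the semigroup property P_{t+s} = P_t P_s on bounded continuous functions. -/
/-!
Substituting `u = √x + σ√t y` turns `P_t f x` into `∫ f (u²) dN(√x, σ²t)(u)`. Because `u ↦ u²` is
even and `N(-m, v)` is the reflection of `N(m, v)`, the inner integral `P_s f (w²)` equals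
`∫ f (u²) dN(w, σ²s)(u)` for every real `w`, not only for `w = √(w²) ≥ 0`. Hence `P_t (P_s f) x`
integrates `f (u²)` against `N(√x, σ²t) ∗ N(0, σ²s) = N(√x, σ²(t + s))`.
-/

open MeasureTheory

noncomputable def gaussDensity (y : ℝ) : ℝ :=
  (Real.sqrt (2 * Real.pi))⁻¹ * Real.exp (-(y ^ 2) / 2)

noncomputable def cirSemigroup (σ : ℝ) (t : ℝ) (f : ℝ → ℂ) (x : ℝ) : ℂ :=
  ∫ y : ℝ, gaussDensity y • f ((Real.sqrt x + σ * Real.sqrt t * y) ^ 2)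

open ProbabilityTheory Real NNReal

section Gaussian

variable {E : Type*} [NormedAddCommGroup E] [NormedSpace ℝ E]

lemma gaussDensity_eq_gaussianPDFReal : gaussDensity = gaussianPDFReal 0 1 := by
  ext y
  simp [gaussDensity, gaussianPDFReal]

lemma gaussianReal_map_const_add_const_mul (m c : ℝ) :
    (gaussianReal 0 1).map (fun y => m + c * y) = gaussianReal m (.mk (c ^ 2) (sq_nonneg c)) := by
  have h := congrArg (Measure.map (m + ·)) (gaussianReal_map_const_mul (μ := 0) (v := 1) c)
  rw [Measure.map_map (by fun_prop) (by fun_prop), gaussianReal_map_const_add] at h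
  simpa [Function.comp_def] using h

lemma integral_gaussDensity_smul_comp_affine (m c : ℝ) {g : ℝ → E} (hg : StronglyMeasurable g) :
    ∫ y, gaussDensity y • g (m + c * y) = ∫ u, g u ∂gaussianReal m (.mk (c ^ 2) (sq_nonneg c)) := by
  rw [← gaussianReal_map_const_add_const_mul, integral_map (by fun_prop) hg.aestronglyMeasurable,
    integral_gaussianReal_eq_integral_smul one_ne_zero, gaussDensity_eq_gaussianPDFReal]

lemma integral_comp_sq_gaussianReal_abs (m : ℝ) (v : ℝ≥0) (g : ℝ → E) :
    ∫ u, g (u ^ 2) ∂gaussianReal |m| v = ∫ u, g (u ^ 2) ∂gaussianReal m v := by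
  rcases abs_cases m with ⟨hm, -⟩ | ⟨hm, -⟩
  · rw [hm]
  · rw [hm, ← gaussianReal_map_neg, ← MeasurableEquiv.neg_apply, integral_map_equiv]
    simp

lemma integral_integral_gaussianReal {g : ℝ → E} (hg : StronglyMeasurable g) {C : ℝ}
    (hC : ∀ x, ‖g x‖ ≤ C) (m : ℝ) (v₁ v₂ : ℝ≥0) :
    ∫ w, (∫ u, g u ∂gaussianReal w v₂) ∂gaussianReal m v₁ = ∫ u, g u ∂gaussianReal m (v₁ + v₂) := by
  have hshift (w : ℝ) : ∫ u, g u ∂gaussianReal w v₂ = ∫ y, g (w + y) ∂gaussianReal 0 v₂ := by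
    simpa [gaussianReal_map_const_add] using
      integral_map_equiv (MeasurableEquiv.addLeft w) g (μ := gaussianReal 0 v₂)
  have hint : Integrable (fun p : ℝ × ℝ => g (p.1 + p.2))
      ((gaussianReal m v₁).prod (gaussianReal 0 v₂)) :=
    .of_bound (hg.comp_measurable measurable_add).aestronglyMeasurable C (ae_of_all _ fun _ => hC _)
  simp_rw [hshift]
  rw [← integral_prod _ hint, ← integral_map measurable_add.aemeasurable hg.aestronglyMeasurable,
    ← Measure.conv, gaussianReal_conv_gaussianReal, add_zero]

end Gaussian

lemma cirSemigroup_eq_integral_gaussianReal (σ t : ℝ) {f : ℝ → ℂ} (hf : StronglyMeasurable f)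
    (x : ℝ) :
    cirSemigroup σ t f x = ∫ u, f (u ^ 2) ∂gaussianReal (√x) (.mk ((σ * √t) ^ 2) (sq_nonneg _)) :=
  integral_gaussDensity_smul_comp_affine (g := fun u => f (u ^ 2)) _ _
    (hf.comp_measurable (by fun_prop))

lemma stronglyMeasurable_cirSemigroup (σ t : ℝ) {f : ℝ → ℂ} (hf : StronglyMeasurable f) :
    StronglyMeasurable (cirSemigroup σ t f) := by
  have hdensity : Measurable fun p : ℝ × ℝ => gaussDensity p.2 := by unfold gaussDensity; fun_prop
  exact .integral_prod_right (hdensity.stronglyMeasurable.smul (hf.comp_measurable (by fun_prop)))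

theorem cirSemigroup_semigroup_property_general
    (σ : ℝ) (f : ℝ → ℂ)
    (hfc : Continuous f) (hfb : ∃ Cb : ℝ, ∀ x : ℝ, ‖f x‖ ≤ Cb) :
    ∀ t ≥ (0 : ℝ), ∀ s ≥ (0 : ℝ), ∀ x ≥ (0 : ℝ),
      cirSemigroup σ (t + s) f x
        = cirSemigroup σ t (fun z => cirSemigroup σ s f z) x := by
  intro t ht s hs x _
  obtain ⟨C, hC⟩ := hfb
  have hf := hfc.stronglyMeasurable
  have hvar : (.mk ((σ * √t) ^ 2) (sq_nonneg _) : ℝ≥0) + .mk ((σ * √s) ^ 2) (sq_nonneg _)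
      = .mk ((σ * √(t + s)) ^ 2) (sq_nonneg _) := by
    ext
    simp only [NNReal.coe_add, NNReal.coe_mk, mul_pow, sq_sqrt ht, sq_sqrt hs,
      sq_sqrt (add_nonneg ht hs)]
    ring
  rw [cirSemigroup_eq_integral_gaussianReal _ _ (stronglyMeasurable_cirSemigroup σ s hf),
    cirSemigroup_eq_integral_gaussianReal _ _ hf]
  simp_rw [cirSemigroup_eq_integral_gaussianReal σ s hf, sqrt_sq_eq_abs,
    integral_comp_sq_gaussianReal_abs]
  rw [integral_integral_gaussianReal (g := fun u => f (u ^ 2))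
    (hf.comp_measurable (by fun_prop)) (fun u => hC _), hvar]

/-- the Gaussian family
`P_t f(x) = ∫ f((√x + σ√t y)²) (2π)^{-1/2} e^{-y²/2} dy`
satisfies the semigroup property `P_{t+s} = P_t P_s` on bounded continuous
functions. -/
theorem cirSemigroup_semigroup_property
    (σ : ℝ) (hσ : 0 < σ) (f : ℝ → ℂ)
    (hfc : Continuous f) (hfb : ∃ Cb : ℝ, ∀ x : ℝ, ‖f x‖ ≤ Cb) :
    ∀ t ≥ (0 : ℝ), ∀ s ≥ (0 : ℝ), ∀ x ≥ (0 : ℝ),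
      cirSemigroup σ (t + s) f x
        = cirSemigroup σ t (fun z => cirSemigroup σ s f z) x :=
  cirSemigroup_semigroup_property_general σ f hfc hfb
end

section
/- Let σ > 0, t > 0, x ≥ 0, and f : [0,∞) → ℂ be continuously differentiable with f, f' of polynomial growth. With u(t,x) := ∫_ℝ f((√x + σ√t y)²) (2π)^{-1/2} e^{−y²/2} dy, one has ∂u/∂t (t,x) = (2t)^{-1} ∫_ℝ (y² − 1) f((√x + σ√t y)²) (2π)^{-1/2} e^{−y²/2} dy. -/
/-! Write `u(t, x) = G(σ√t)` with `G(b) = ∫ φ(y) h(√x + b y) dy` and `h(z) = f(z²)`, where `φ` is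
the standard Gaussian density. Differentiating under the integral sign (polynomial growth of `h'`
against Gaussian decay gives the domination), `G'(b) = ∫ φ(y) y h'(√x + b y) dy`. Since
`φ' = -y φ`, integrating by parts turns `b G'(b) = ∫ φ(y) y (d/dy) h(√x + b y) dy` into
`∫ φ(y) (y² - 1) h(√x + b y) dy`, and the chain rule contributes `σ / (2√t) = (2t)⁻¹ σ√t`. -/

open MeasureTheory

noncomputable def cirU (σ : ℝ) (f : ℝ → ℂ) (t x : ℝ) : ℂ :=
  ∫ y : ℝ, gaussDensity y • f ((Real.sqrt x + σ * Real.sqrt t * y) ^ 2)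

def HasPolynomialGrowth {E : Type*} [NormedAddCommGroup E] (g : ℝ → E) : Prop :=
  ∃ (C : ℝ) (p : ℕ), ∀ z, ‖g z‖ ≤ C * (1 + |z|) ^ p

section PolynomialGrowth

variable {E : Type*} [NormedAddCommGroup E]

lemma norm_le_mul_pow_of_one_add_abs_le {g : ℝ → E} {C : ℝ} {p : ℕ}
    (hg : ∀ z, ‖g z‖ ≤ C * (1 + |z|) ^ p) {z w : ℝ} (hzw : 1 + |z| ≤ w) :
    ‖g z‖ ≤ C * w ^ p := by
  have hC : 0 ≤ C := by simpa using (norm_nonneg _).trans (hg 0)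
  exact (hg z).trans (by gcongr)

lemma one_add_abs_add_mul_le (a b y : ℝ) :
    1 + |a + b * y| ≤ (1 + |a| + |b|) * (1 + |y|) := by
  have := abs_add_le a (b * y)
  rw [abs_mul] at this
  nlinarith [abs_nonneg a, abs_nonneg b, abs_nonneg y]

lemma norm_comp_add_mul_le {g : ℝ → E} {C : ℝ} {p : ℕ}
    (hg : ∀ z, ‖g z‖ ≤ C * (1 + |z|) ^ p) (a : ℝ) {b B : ℝ} (hb : |b| ≤ B) (y : ℝ) :
    ‖g (a + b * y)‖ ≤ C * (1 + |a| + B) ^ p * (1 + |y|) ^ p := by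
  rw [mul_assoc, ← mul_pow]
  refine norm_le_mul_pow_of_one_add_abs_le hg ((one_add_abs_add_mul_le a b y).trans ?_)
  gcongr

namespace HasPolynomialGrowth

lemma comp_add_mul {g : ℝ → E} (hg : HasPolynomialGrowth g) (a b : ℝ) :
    HasPolynomialGrowth fun y => g (a + b * y) := by
  obtain ⟨C, p, hC⟩ := hg
  exact ⟨C * (1 + |a| + |b|) ^ p, p, norm_comp_add_mul_le hC a le_rfl⟩

lemma comp_sq {g : ℝ → E} (hg : HasPolynomialGrowth g) :
    HasPolynomialGrowth fun z => g (z ^ 2) := by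
  obtain ⟨C, p, hC⟩ := hg
  refine ⟨C, 2 * p, fun z => ?_⟩
  rw [pow_mul]
  refine norm_le_mul_pow_of_one_add_abs_le hC ?_
  rw [abs_pow]
  nlinarith [abs_nonneg z]

lemma smul [NormedSpace ℝ E] {c : ℝ → ℝ} {g : ℝ → E} (hc : HasPolynomialGrowth c)
    (hg : HasPolynomialGrowth g) : HasPolynomialGrowth fun z => c z • g z := by
  obtain ⟨C, p, hC⟩ := hc
  obtain ⟨D, q, hD⟩ := hg
  refine ⟨C * D, p + q, fun z => ?_⟩
  rw [norm_smul, pow_add, mul_mul_mul_comm]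
  exact mul_le_mul (hC z) (hD z) (norm_nonneg _) ((norm_nonneg _).trans (hC z))

end HasPolynomialGrowth

lemma hasPolynomialGrowth_const (c : E) : HasPolynomialGrowth fun _ : ℝ => c :=
  ⟨‖c‖, 0, fun _ => by simp⟩

lemma hasPolynomialGrowth_id : HasPolynomialGrowth fun y : ℝ => y :=
  ⟨1, 1, fun y => by simp⟩

lemma hasPolynomialGrowth_sq_sub_one : HasPolynomialGrowth fun y : ℝ => y ^ 2 - 1 := by
  refine ⟨1, 2, fun y => ?_⟩
  rw [Real.norm_eq_abs, one_mul, abs_sub_le_iff]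
  constructor <;> nlinarith [abs_nonneg y, sq_abs y]

end PolynomialGrowth

section Gaussian

lemma gaussDensity_nonneg (y : ℝ) : 0 ≤ gaussDensity y := by
  unfold gaussDensity; positivity

lemma continuous_gaussDensity : Continuous gaussDensity := by
  unfold gaussDensity; fun_prop

lemma hasDerivAt_gaussDensity (y : ℝ) :
    HasDerivAt gaussDensity (-y * gaussDensity y) y := by
  have hexponent : HasDerivAt (fun y : ℝ => -(y ^ 2) / 2) (-y) y :=
    ((hasDerivAt_pow 2 y).neg.div_const 2).congr_deriv (by ring)
  refine (hexponent.exp.const_mul (Real.sqrt (2 * Real.pi))⁻¹).congr_deriv ?_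
  unfold gaussDensity
  ring

lemma integrable_one_add_abs_pow_mul_gaussDensity (q : ℕ) :
    Integrable fun y : ℝ => (1 + |y|) ^ q * gaussDensity y := by
  have hmoment (k : ℕ) : Integrable fun y : ℝ => |y| ^ k * Real.exp (-(y ^ 2) / 2) := by
    have h := integrable_rpow_mul_exp_neg_mul_sq (b := 1 / 2) (by norm_num)
      (s := k) (neg_one_lt_zero.trans_le k.cast_nonneg)
    simp_rw [Real.rpow_natCast] at h
    convert h.abs using 2 with y
    rw [abs_mul, abs_pow, Real.abs_exp]
    ring_nf
  have hexpand (y : ℝ) : (1 + |y|) ^ q * gaussDensity y = ∑ k ∈ Finset.range (q + 1),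
      ((Real.sqrt (2 * Real.pi))⁻¹ * q.choose k) * (|y| ^ (q - k) * Real.exp (-(y ^ 2) / 2)) := by
    rw [add_pow, gaussDensity, Finset.sum_mul]
    congr 1 with k
    ring
  simp_rw [hexpand]
  exact integrable_finsetSum _ fun k _ => (hmoment (q - k)).const_mul _

variable {E : Type*} [NormedAddCommGroup E] [NormedSpace ℝ E]

lemma integrable_gaussDensity_smul {g : ℝ → E} (hc : Continuous g)
    (hg : HasPolynomialGrowth g) : Integrable fun y => gaussDensity y • g y := by
  obtain ⟨C, p, hC⟩ := hg
  refine ((integrable_one_add_abs_pow_mul_gaussDensity p).const_mul C).mono'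
    (continuous_gaussDensity.smul hc).aestronglyMeasurable (ae_of_all _ fun y => ?_)
  rw [norm_smul, Real.norm_of_nonneg (gaussDensity_nonneg y)]
  calc gaussDensity y * ‖g y‖ ≤ gaussDensity y * (C * (1 + |y|) ^ p) :=
        mul_le_mul_of_nonneg_left (hC y) (gaussDensity_nonneg y)
    _ = C * ((1 + |y|) ^ p * gaussDensity y) := by ring

lemma integrable_gaussDensity_mul_smul {c : ℝ → ℝ} {g : ℝ → E} (hcc : Continuous c)
    (hc : HasPolynomialGrowth c) (hgc : Continuous g) (hg : HasPolynomialGrowth g) :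
    Integrable fun y => (gaussDensity y * c y) • g y := by
  simp_rw [mul_smul]
  exact integrable_gaussDensity_smul (hcc.smul hgc) (hc.smul hg)

theorem integral_gaussDensity_mul_smul_deriv [CompleteSpace E] {g g' : ℝ → E}
    (hd : ∀ y, HasDerivAt g (g' y) y) (hg'c : Continuous g')
    (hg : HasPolynomialGrowth g) (hg' : HasPolynomialGrowth g') :
    ∫ y, (gaussDensity y * y) • g' y = ∫ y, (gaussDensity y * (y ^ 2 - 1)) • g y := by
  have hgc : Continuous g := continuous_iff_continuousAt.2 fun y => (hd y).continuousAt
  have hprod (y : ℝ) : HasDerivAt (fun y => (gaussDensity y * y) • g y)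
      ((gaussDensity y * y) • g' y - (gaussDensity y * (y ^ 2 - 1)) • g y) y := by
    refine (((hasDerivAt_gaussDensity y).mul (hasDerivAt_id' y)).smul (hd y)).congr_deriv ?_
    rw [show -y * gaussDensity y * y + gaussDensity y * 1 = -(gaussDensity y * (y ^ 2 - 1))
      by ring, neg_smul, ← sub_eq_add_neg]
    rfl
  have hI₁ := integrable_gaussDensity_mul_smul continuous_id' hasPolynomialGrowth_id hg'c hg'
  have hI₂ := integrable_gaussDensity_mul_smul (by fun_prop) hasPolynomialGrowth_sq_sub_one hgc hg
  have hzero := integral_eq_zero_of_hasDerivAt_of_integrable hprod (hI₁.sub hI₂)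
    (integrable_gaussDensity_mul_smul continuous_id' hasPolynomialGrowth_id hgc hg)
  rwa [integral_sub hI₁ hI₂, sub_eq_zero] at hzero

end Gaussian

section ScaleDerivative

variable {E : Type*} [NormedAddCommGroup E] [NormedSpace ℝ E]
  {h h' : ℝ → E}

lemma hasDerivAt_comp_add_mul (hd : ∀ z, HasDerivAt h (h' z) z) (a b y : ℝ) :
    HasDerivAt (fun y => h (a + b * y)) (b • h' (a + b * y)) y := by
  simpa [Function.comp_def] using
    (hd (a + b * y)).scomp y (((hasDerivAt_id' y).const_mul b).const_add a)

theorem hasDerivAt_integral_gaussDensity_smul_comp_add_mul [CompleteSpace E]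
    (hd : ∀ z, HasDerivAt h (h' z) z)
    (hh'c : Continuous h') (hh : HasPolynomialGrowth h) (hh' : HasPolynomialGrowth h')
    (a b : ℝ) :
    HasDerivAt (fun b => ∫ y, gaussDensity y • h (a + b * y))
      (∫ y, (gaussDensity y * y) • h' (a + b * y)) b := by
  have hhc : Continuous h := continuous_iff_continuousAt.2 fun z => (hd z).continuousAt
  obtain ⟨C, p, hC⟩ := hh'
  set K := C * (1 + |a| + (|b| + 1)) ^ p
  have hbound : ∀ y, ∀ b' ∈ Metric.ball b 1,
      ‖(gaussDensity y * y) • h' (a + b' * y)‖ ≤ K * ((1 + |y|) ^ (p + 1) * gaussDensity y) := by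
    intro y b' hb'
    have hb'B : |b'| ≤ |b| + 1 := by
      have := abs_sub_abs_le_abs_sub b' b
      rw [Metric.mem_ball, Real.dist_eq] at hb'
      linarith
    rw [norm_smul, Real.norm_eq_abs, abs_mul, abs_of_nonneg (gaussDensity_nonneg y)]
    calc gaussDensity y * |y| * ‖h' (a + b' * y)‖
        ≤ gaussDensity y * (1 + |y|) * (K * (1 + |y|) ^ p) := by
          have hφ := gaussDensity_nonneg y
          gcongr
          · linarith
          · exact norm_comp_add_mul_le hC a hb'B y
      _ = K * ((1 + |y|) ^ (p + 1) * gaussDensity y) := by ring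
  refine (hasDerivAt_integral_of_dominated_loc_of_deriv_le (Metric.ball_mem_nhds b one_pos)
    (Filter.Eventually.of_forall fun b' => ?_) ?_ ?_ (ae_of_all _ fun y => hbound y)
    ((integrable_one_add_abs_pow_mul_gaussDensity (p + 1)).const_mul K)
    (ae_of_all _ fun y b' _ => ?_)).2
  · exact (continuous_gaussDensity.smul (hhc.comp (by fun_prop))).aestronglyMeasurable
  · exact integrable_gaussDensity_smul (hhc.comp (by fun_prop)) (hh.comp_add_mul a b)
  · exact ((continuous_gaussDensity.mul continuous_id').smul
      (hh'c.comp (by fun_prop))).aestronglyMeasurable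
  · have hinner : HasDerivAt (fun b => a + b * y) y b' := by
      simpa using ((hasDerivAt_id' b').mul_const y).const_add a
    exact (((hd (a + b' * y)).scomp b' hinner).const_smul (gaussDensity y)).congr_deriv
      (smul_smul _ _ _)

theorem smul_integral_gaussDensity_mul_smul_comp_add_mul [CompleteSpace E]
    (hd : ∀ z, HasDerivAt h (h' z) z)
    (hh'c : Continuous h') (hh : HasPolynomialGrowth h) (hh' : HasPolynomialGrowth h')
    (a b : ℝ) :
    b • ∫ y, (gaussDensity y * y) • h' (a + b * y)
      = ∫ y, (gaussDensity y * (y ^ 2 - 1)) • h (a + b * y) := by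
  rw [← integral_smul]
  simp_rw [smul_comm b]
  exact integral_gaussDensity_mul_smul_deriv (hasDerivAt_comp_add_mul hd a b)
    (continuous_const.smul (hh'c.comp (by fun_prop)))
    (hh.comp_add_mul a b) ((hasPolynomialGrowth_const b).smul (hh'.comp_add_mul a b))

end ScaleDerivative

theorem cirU_time_derivative_general
    (σ t x : ℝ) (ht : 0 < t)
    (f : ℝ → ℂ) (hf : ContDiff ℝ 1 f)
    (hgrowth : ∃ (C : ℝ) (p : ℕ), ∀ z : ℝ,
      ‖f z‖ ≤ C * (1 + |z|) ^ p ∧ ‖deriv f z‖ ≤ C * (1 + |z|) ^ p) :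
    HasDerivAt (fun τ => cirU σ f τ x)
      (((2 * t)⁻¹ : ℝ) •
        ∫ y : ℝ, (gaussDensity y * (y ^ 2 - 1)) •
          f ((Real.sqrt x + σ * Real.sqrt t * y) ^ 2)) t := by
  obtain ⟨C, p, hCp⟩ := hgrowth
  set h' : ℝ → ℂ := fun z => (2 * z) • deriv f (z ^ 2)
  have hd (z : ℝ) : HasDerivAt (fun z => f (z ^ 2)) (h' z) z := by
    simpa [Function.comp_def, h'] using
      ((hf.differentiable one_ne_zero) (z ^ 2)).hasDerivAt.scomp z (hasDerivAt_pow 2 z)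
  have hh'c : Continuous h' :=
    (continuous_const.mul continuous_id').smul
      ((hf.continuous_deriv le_rfl).comp (continuous_pow 2))
  have hh : HasPolynomialGrowth fun z => f (z ^ 2) :=
    HasPolynomialGrowth.comp_sq ⟨C, p, fun z => (hCp z).1⟩
  have hh' : HasPolynomialGrowth h' :=
    ((hasPolynomialGrowth_const 2).smul hasPolynomialGrowth_id).smul
      (HasPolynomialGrowth.comp_sq ⟨C, p, fun z => (hCp z).2⟩)
  have hscale : HasDerivAt (fun τ => σ * Real.sqrt τ) (σ * (1 / (2 * Real.sqrt t))) t :=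
    (Real.hasDerivAt_sqrt ht.ne').const_mul σ
  refine ((hasDerivAt_integral_gaussDensity_smul_comp_add_mul hd hh'c hh hh' (Real.sqrt x)
    (σ * Real.sqrt t)).scomp t hscale).congr_deriv ?_
  rw [← smul_integral_gaussDensity_mul_smul_comp_add_mul hd hh'c hh hh', smul_smul]
  congr 1
  have hsqrt_pos : 0 < Real.sqrt t := Real.sqrt_pos.2 ht
  field_simp
  rw [Real.sq_sqrt ht.le]

/-- time derivative of
`u(t,x) = ∫ f((√x + σ√t y)²) (2π)^{-1/2} e^{-y²/2} dy`:
`∂u/∂t = (2t)⁻¹ ∫ (y² − 1) f((√x + σ√t y)²) (2π)^{-1/2} e^{-y²/2} dy`. -/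
theorem cirU_time_derivative
    (σ t x : ℝ) (hσ : 0 < σ) (ht : 0 < t) (hx : 0 ≤ x)
    (f : ℝ → ℂ) (hf : ContDiff ℝ 1 f)
    (hgrowth : ∃ (C : ℝ) (p : ℕ), ∀ z : ℝ,
      ‖f z‖ ≤ C * (1 + |z|) ^ p ∧ ‖deriv f z‖ ≤ C * (1 + |z|) ^ p) :
    HasDerivAt (fun τ => cirU σ f τ x)
      (((2 * t)⁻¹ : ℝ) •
        ∫ y : ℝ, (gaussDensity y * (y ^ 2 - 1)) •
          f ((Real.sqrt x + σ * Real.sqrt t * y) ^ 2)) t :=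
  cirU_time_derivative_general σ t x ht f hf hgrowth
end

section
/- Let ψ(x) = (1+x²)^{s/2}, s ∈ ℕ, σ > 0, and define for bounded measurable f : [0,∞) → ℂ and t ≥ 0: P_t f(x) := ∫_ℝ f((√x + σ√t y)²) (2π)^{-1/2} e^{−y²/2} dy. Then there exists a function C : [0,∞) → (0,∞), locally bounded, such that sup_{x≥0} ψ(x)^{-1} |P_t f(x)| ≤ C(t) sup_{x≥0} ψ(x)^{-1}|f(x)| for all f in the ψ-weighted sup-norm space. That is, P_t is a bounded operator on the weighted space with norm at most C(t). -/
open MeasureTheory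

lemma integral_gaussDensity : ∫ y, gaussDensity y = 1 := by
  have hexp : ∀ y : ℝ, Real.exp (-(y ^ 2) / 2) = Real.exp (-(1 / 2 : ℝ) * y ^ 2) := fun y => by
    ring_nf
  simp_rw [gaussDensity, integral_const_mul, hexp, integral_gaussian]
  rw [show Real.pi / (1 / 2) = 2 * Real.pi by ring]
  exact inv_mul_cancel₀ (by positivity)

lemma integrable_gaussDensity_mul_pow (n : ℕ) :
    Integrable (fun y => gaussDensity y * y ^ n) := by
  have h := (integrable_rpow_mul_exp_neg_mul_sq (b := 1 / 2) (by norm_num) (s := n)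
    (by linarith [n.cast_nonneg (α := ℝ)])).const_mul (Real.sqrt (2 * Real.pi))⁻¹
  refine h.congr (Filter.Eventually.of_forall fun y => ?_)
  simp only [gaussDensity, Real.rpow_natCast]
  ring_nf

lemma integrable_gaussDensity_mul_one_add_mul_sq_pow (c : ℝ) (s : ℕ) :
    Integrable (fun y => gaussDensity y * (1 + c * y ^ 2) ^ s) := by
  have hexpand : ∀ y : ℝ, gaussDensity y * (1 + c * y ^ 2) ^ s =
      ∑ k ∈ Finset.range (s + 1), (c ^ k * s.choose k) * (gaussDensity y * y ^ (2 * k)) := by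
    intro y
    rw [add_comm, add_pow, Finset.mul_sum]
    refine Finset.sum_congr rfl fun k _ => ?_
    rw [mul_pow, ← pow_mul, one_pow]
    ring
  simp_rw [hexpand]
  exact integrable_finsetSum _ fun k _ => (integrable_gaussDensity_mul_pow (2 * k)).const_mul _

noncomputable def gaussMoment (c : ℝ) (s : ℕ) : ℝ :=
  ∫ y, gaussDensity y * (1 + c * y ^ 2) ^ s

lemma gaussMoment_mono {c d : ℝ} (hc : 0 ≤ c) (hcd : c ≤ d) (s : ℕ) :
    gaussMoment c s ≤ gaussMoment d s := by
  refine integral_mono (integrable_gaussDensity_mul_one_add_mul_sq_pow c s)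
    (integrable_gaussDensity_mul_one_add_mul_sq_pow d s) fun y => ?_
  gcongr
  exact gaussDensity_nonneg y

lemma one_le_gaussMoment {c : ℝ} (hc : 0 ≤ c) (s : ℕ) : 1 ≤ gaussMoment c s := by
  calc (1 : ℝ) = gaussMoment 0 s := by simp [gaussMoment, integral_gaussDensity]
    _ ≤ gaussMoment c s := gaussMoment_mono le_rfl hc s

lemma one_add_add_pow_four_le (u v : ℝ) :
    1 + (u + v) ^ 4 ≤ 8 * ((1 + u ^ 4) * (1 + v ^ 2) ^ 2) := by
  have hconvex : (u + v) ^ 4 ≤ 8 * u ^ 4 + 8 * v ^ 4 := by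
    nlinarith [sq_nonneg (u - v), sq_nonneg (u + v), sq_nonneg (u ^ 2 - v ^ 2)]
  nlinarith [sq_nonneg v, pow_nonneg (sq_nonneg u) 2, pow_nonneg (sq_nonneg v) 2,
    mul_nonneg (pow_nonneg (sq_nonneg u) 2) (sq_nonneg v),
    mul_nonneg (pow_nonneg (sq_nonneg u) 2) (pow_nonneg (sq_nonneg v) 2)]

lemma one_add_sq_rpow_sq_sqrt_add_le (s : ℕ) {x : ℝ} (hx : 0 ≤ x) (v : ℝ) :
    (1 + ((Real.sqrt x + v) ^ 2) ^ 2) ^ ((s : ℝ) / 2)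
      ≤ 8 ^ ((s : ℝ) / 2) * (1 + x ^ 2) ^ ((s : ℝ) / 2) * (1 + v ^ 2) ^ s := by
  have hbase : 1 + ((Real.sqrt x + v) ^ 2) ^ 2 ≤ 8 * ((1 + x ^ 2) * ((1 + v ^ 2) ^ 2)) := by
    have hsqrt : Real.sqrt x ^ 4 = x ^ 2 := by rw [show 4 = 2 * 2 from rfl, pow_mul, Real.sq_sqrt hx]
    simpa [hsqrt, ← pow_mul] using one_add_add_pow_four_le (Real.sqrt x) v
  calc (1 + ((Real.sqrt x + v) ^ 2) ^ 2) ^ ((s : ℝ) / 2)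
      ≤ (8 * ((1 + x ^ 2) * ((1 + v ^ 2) ^ 2))) ^ ((s : ℝ) / 2) := by gcongr
    _ = 8 ^ ((s : ℝ) / 2) * (1 + x ^ 2) ^ ((s : ℝ) / 2) * (1 + v ^ 2) ^ s := by
      rw [Real.mul_rpow (by norm_num) (by positivity), Real.mul_rpow (by positivity) (by positivity),
        ← Real.rpow_natCast (1 + v ^ 2) 2, ← Real.rpow_mul (by positivity), ← mul_assoc]
      norm_num [mul_div_cancel₀]

lemma norm_cirSemigroup_le (s : ℕ) (σ : ℝ) {t : ℝ} (ht : 0 ≤ t) {f : ℝ → ℂ} {K : ℝ}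
    (hK : 0 ≤ K) (hf : ∀ u ≥ (0 : ℝ), ‖f u‖ ≤ K * (1 + u ^ 2) ^ ((s : ℝ) / 2))
    {x : ℝ} (hx : 0 ≤ x) :
    ‖cirSemigroup σ t f x‖
      ≤ 8 ^ ((s : ℝ) / 2) * gaussMoment (σ ^ 2 * t) s * K * (1 + x ^ 2) ^ ((s : ℝ) / 2) := by
  have hmoment : (σ * Real.sqrt t) ^ 2 = σ ^ 2 * t := by rw [mul_pow, Real.sq_sqrt ht]
  have hpointwise : ∀ y, ‖gaussDensity y • f ((Real.sqrt x + σ * Real.sqrt t * y) ^ 2)‖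
      ≤ 8 ^ ((s : ℝ) / 2) * K * (1 + x ^ 2) ^ ((s : ℝ) / 2) *
        (gaussDensity y * (1 + σ ^ 2 * t * y ^ 2) ^ s) := by
    intro y
    have hweight := one_add_sq_rpow_sq_sqrt_add_le s hx (σ * Real.sqrt t * y)
    rw [mul_pow, hmoment] at hweight
    rw [norm_smul, Real.norm_of_nonneg (gaussDensity_nonneg y)]
    calc gaussDensity y * ‖f ((Real.sqrt x + σ * Real.sqrt t * y) ^ 2)‖
        ≤ gaussDensity y * (K * (8 ^ ((s : ℝ) / 2) * (1 + x ^ 2) ^ ((s : ℝ) / 2) *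
            (1 + σ ^ 2 * t * y ^ 2) ^ s)) := by
          gcongr
          · exact gaussDensity_nonneg y
          · exact (hf _ (sq_nonneg _)).trans (by gcongr)
      _ = _ := by ring
  calc ‖cirSemigroup σ t f x‖
      ≤ ∫ y, 8 ^ ((s : ℝ) / 2) * K * (1 + x ^ 2) ^ ((s : ℝ) / 2) *
          (gaussDensity y * (1 + σ ^ 2 * t * y ^ 2) ^ s) :=
        norm_integral_le_of_norm_le
          ((integrable_gaussDensity_mul_one_add_mul_sq_pow _ s).const_mul _)
          (Filter.Eventually.of_forall hpointwise)
    _ = _ := by rw [integral_const_mul, gaussMoment]; ring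

theorem cirSemigroup_weighted_bound_general
    (s : ℕ) (σ : ℝ)
    (ψ : ℝ → ℝ) (hψ : ∀ x : ℝ, ψ x = (1 + x ^ 2) ^ ((s : ℝ) / 2)) :
    ∃ C : ℝ → ℝ,
      (∀ t ≥ (0 : ℝ), 0 < C t) ∧
      (∀ T ≥ (0 : ℝ), ∃ M : ℝ, ∀ t ∈ Set.Icc (0 : ℝ) T, C t ≤ M) ∧
      (∀ t ≥ (0 : ℝ), ∀ f : ℝ → ℂ, Measurable f →
        ∀ K ≥ (0 : ℝ), (∀ x ≥ (0 : ℝ), ‖f x‖ ≤ K * ψ x) →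
        ∀ x ≥ (0 : ℝ), ‖cirSemigroup σ t f x‖ ≤ C t * K * ψ x) := by
  obtain rfl : ψ = fun x => (1 + x ^ 2) ^ ((s : ℝ) / 2) := funext hψ
  refine ⟨fun t => 8 ^ ((s : ℝ) / 2) * gaussMoment (σ ^ 2 * t) s, ?_, ?_, ?_⟩
  · intro t ht
    have := one_le_gaussMoment (c := σ ^ 2 * t) (by positivity) s
    positivity
  · intro T _
    refine ⟨8 ^ ((s : ℝ) / 2) * gaussMoment (σ ^ 2 * T) s, fun t ht => ?_⟩
    gcongr 8 ^ ((s : ℝ) / 2) * ?_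
    exact gaussMoment_mono (by have := ht.1; positivity) (by gcongr; exact ht.2) s
  · intro t ht f _ K hK hf x hx
    exact norm_cirSemigroup_le s σ ht hK hf hx

/-- with `ψ(x) = (1+x²)^{s/2}`, the operators
`P_t f(x) = ∫ f((√x + σ√t y)²) (2π)^{-1/2} e^{-y²/2} dy` are bounded on the
`ψ`-weighted sup-norm space, with locally bounded operator norm `C(t)`. -/
theorem cirSemigroup_weighted_bound
    (s : ℕ) (σ : ℝ) (hσ : 0 < σ)
    (ψ : ℝ → ℝ) (hψ : ∀ x : ℝ, ψ x = (1 + x ^ 2) ^ ((s : ℝ) / 2)) :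
    ∃ C : ℝ → ℝ,
      (∀ t ≥ (0 : ℝ), 0 < C t) ∧
      (∀ T ≥ (0 : ℝ), ∃ M : ℝ, ∀ t ∈ Set.Icc (0 : ℝ) T, C t ≤ M) ∧
      (∀ t ≥ (0 : ℝ), ∀ f : ℝ → ℂ, Measurable f →
        ∀ K ≥ (0 : ℝ), (∀ x ≥ (0 : ℝ), ‖f x‖ ≤ K * ψ x) →
        ∀ x ≥ (0 : ℝ), ‖cirSemigroup σ t f x‖ ≤ C t * K * ψ x) :=
  cirSemigroup_weighted_bound_general s σ ψ hψ
end

section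
/- Let D ⊆ ℝ^N be the closure of a C¹ domain with outer unit normal n, and let V : D → ℝ^N be a C¹ vector field with bounded derivative satisfying V(x)·n(x) ≤ 0 for all x ∈ ∂D. Then for every x ∈ D the solution of the ODE x'(t) = V(x(t)), x(0) = x, remains in D for all t ≥ 0, i.e., the flow Fl_t maps D into D for all t ≥ 0. -/
/-!
On `D = {g ≤ 0}` the field `V` is tangent in Nagumo's sense: at an interior point trivially,
and at a boundary point because `∇g ≠ 0` lets one tilt `V` slightly towards `-∇g` and so push
`y + hV` into `D` at cost `o(h)`. For a solution `c` with `c 0 ∈ D`, the distance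
`f t = dist(c t, D)` then satisfies the Dini estimate `D⁺f ≤ K f` (compare `c (t + h)` with
`y + h V y` for a point `y ∈ D` nearest to `c t`, using that `V` is `K`-Lipschitz), and Grönwall's
inequality gives `f ≡ 0`.
-/

open Filter Topology Set Metric
open scoped NNReal

lemma tendsto_const_add_nhdsGT (t : ℝ) : Tendsto (t + ·) (𝓝[>] 0) (𝓝[>] t) :=
  tendsto_nhdsWithin_of_tendsto_nhds_of_eventually_within _
    (by simpa using ((continuous_const_add t).tendsto 0).mono_left nhdsWithin_le_nhds)
    (eventually_nhdsWithin_of_forall fun _ hh => lt_add_of_pos_right t hh)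

section Nagumo

variable {E : Type*} [NormedAddCommGroup E] [NormedSpace ℝ E]

/-- `v` lies in the contingent (Bouligand) cone of `S` at `y`:
`liminf_{h → 0⁺} dist (y + h v, S) / h = 0`. -/
def IsContingentDirection (S : Set E) (y v : E) : Prop :=
  ∀ ε > 0, ∃ᶠ h in 𝓝[>] (0 : ℝ), infDist (y + h • v) S ≤ ε * h

lemma isContingentDirection_of_mem_interior {S : Set E} {y : E} (hy : y ∈ interior S) (v : E) :
    IsContingentDirection S y v := by
  intro ε hε
  have hline : Tendsto (fun h : ℝ => y + h • v) (𝓝[>] 0) (𝓝 y) :=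
    ((continuous_const.add (continuous_id.smul continuous_const)).tendsto' 0 y
      (by simp)).mono_left nhdsWithin_le_nhds
  refine Eventually.frequently ?_
  filter_upwards [hline.eventually (mem_interior_iff_mem_nhds.1 hy), self_mem_nhdsWithin]
    with h hS hpos
  rw [infDist_zero_of_mem hS]
  exact mul_nonneg hε.le (le_of_lt hpos)

lemma HasFDerivAt.eventually_lt_of_apply_neg {g : E → ℝ} {g' : E →L[ℝ] ℝ} {y w : E}
    (hg : HasFDerivAt g g' y) (hw : g' w < 0) :
    ∀ᶠ h in 𝓝[>] (0 : ℝ), g (y + h • w) < g y := by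
  have hline : HasDerivAt (fun h : ℝ => y + h • w) w 0 := by
    simpa using ((hasDerivAt_id (0 : ℝ)).smul_const w).const_add y
  have hcomp : HasDerivAt (fun h : ℝ => g (y + h • w)) (g' w) 0 :=
    (by simpa using hg : HasFDerivAt g g' (y + (0 : ℝ) • w)).comp_hasDerivAt 0 hline
  have hslope := (hasDerivAt_iff_tendsto_slope.1 hcomp).mono_left
    (nhdsWithin_mono 0 fun _ hh => ne_of_gt hh)
  filter_upwards [hslope (Iio_mem_nhds hw), self_mem_nhdsWithin] with h hneg hpos
  rw [mem_preimage, mem_Iio, slope_def_field, sub_zero, zero_smul, add_zero,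
    div_lt_iff₀ hpos, zero_mul, sub_neg] at hneg
  exact hneg

/-- Tilting `v` by `δ u`, where `g' u = -1`, makes the first-order change of `g` negative. -/
lemma isContingentDirection_setOf_le_zero {g : E → ℝ} {g' : E →L[ℝ] ℝ} {y v : E}
    (hg : HasFDerivAt g g' y) (hy : g y ≤ 0) (hg' : g' ≠ 0) (hv : g' v ≤ 0) :
    IsContingentDirection {x | g x ≤ 0} y v := by
  obtain ⟨u₀, hu₀⟩ : ∃ u₀, g' u₀ ≠ 0 := by
    by_contra! h
    exact hg' (ContinuousLinearMap.ext h)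
  set u := -(g' u₀)⁻¹ • u₀
  have hu : g' u = -1 := by simp [u, hu₀]
  intro ε hε
  set δ := ε / (‖u‖ + 1)
  have hδ : 0 < δ := by positivity
  have hδu : δ * ‖u‖ ≤ ε := by
    rw [div_mul_eq_mul_div, div_le_iff₀ (by positivity)]
    nlinarith [norm_nonneg u]
  have hw : g' (v + δ • u) < 0 := by
    rw [map_add, map_smul, hu, smul_eq_mul]
    linarith
  refine Eventually.frequently ?_
  filter_upwards [hg.eventually_lt_of_apply_neg hw, self_mem_nhdsWithin] with h hlt hpos
  calc infDist (y + h • v) {x | g x ≤ 0}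
      ≤ dist (y + h • v) (y + h • (v + δ • u)) :=
        infDist_le_dist_of_mem (show g _ ≤ 0 from (hlt.trans_le hy).le)
    _ = h * (δ * ‖u‖) := by
        rw [dist_add_left, dist_eq_norm, ← smul_sub, sub_add_cancel_left, smul_neg, norm_neg,
          norm_smul, norm_smul, Real.norm_of_nonneg (le_of_lt hpos), Real.norm_of_nonneg hδ.le]
    _ ≤ ε * h := by nlinarith [mem_Ioi.1 hpos]

lemma frequently_infDist_le_of_hasDerivWithinAt {S : Set E} {V : E → E} {K : ℝ≥0}
    (hV : LipschitzWith K V) {c : ℝ → E} {t : ℝ}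
    (hc : HasDerivWithinAt c (V (c t)) (Ici t) t) {y : E}
    (hy : IsContingentDirection S y (V y)) {ε : ℝ} (hε : 0 < ε) :
    ∃ᶠ h in 𝓝[>] (0 : ℝ), infDist (c (t + h)) S ≤ (1 + K * h) * dist (c t) y + ε * h := by
  have hshift : Tendsto (t + ·) (𝓝[>] 0) (𝓝[Ici t] t) :=
    (tendsto_const_add_nhdsGT t).mono_right (nhdsWithin_mono t Ioi_subset_Ici_self)
  have hderiv : ∀ᶠ h in 𝓝[>] (0 : ℝ), ‖c (t + h) - c t - h • V (c t)‖ ≤ ε / 2 * h := by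
    filter_upwards [hshift.eventually (hc.isLittleO.def (half_pos hε)),
      self_mem_nhdsWithin] with h hh hpos
    simpa [abs_of_pos (mem_Ioi.1 hpos)] using hh
  refine ((hy (ε / 2) (half_pos hε)).and_eventually (hderiv.and self_mem_nhdsWithin)).mono ?_
  rintro h ⟨htan, hder, hpos⟩
  have hh : 0 ≤ h := le_of_lt hpos
  have hdist : dist (c (t + h)) (y + h • V y) ≤
      ε / 2 * h + (dist (c t) y + h * (K * dist (c t) y)) := by
    rw [dist_eq_norm, show c (t + h) - (y + h • V y) =
      (c (t + h) - c t - h • V (c t)) + ((c t - y) + h • (V (c t) - V y)) by rw [smul_sub]; abel]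
    refine (norm_add_le _ _).trans (add_le_add hder ((norm_add_le _ _).trans ?_))
    rw [norm_smul, Real.norm_of_nonneg hh, ← dist_eq_norm, ← dist_eq_norm]
    gcongr
    exact hV.dist_le_mul _ _
  calc infDist (c (t + h)) S ≤ infDist (y + h • V y) S + dist (c (t + h)) (y + h • V y) :=
        infDist_le_infDist_add_dist
    _ ≤ ε / 2 * h + (ε / 2 * h + (dist (c t) y + h * (K * dist (c t) y))) :=
        add_le_add htan hdist
    _ = (1 + K * h) * dist (c t) y + ε * h := by ring

/-- Nagumo's theorem. -/
theorem ODE_solution_mem_of_forall_isContingentDirection [ProperSpace E] {S : Set E}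
    (hS : IsClosed S) {V : E → E} {K : ℝ≥0} (hV : LipschitzWith K V)
    (hVS : ∀ y ∈ S, IsContingentDirection S y (V y)) {c : ℝ → E} {a b : ℝ}
    (hc : ContinuousOn c (Icc a b))
    (hc' : ∀ t ∈ Ico a b, HasDerivWithinAt c (V (c t)) (Ici t) t)
    (ha : c a ∈ S) : ∀ t ∈ Icc a b, c t ∈ S := by
  have hne : S.Nonempty := ⟨_, ha⟩
  set f : ℝ → ℝ := fun t => infDist (c t) S
  have hdini : ∀ t ∈ Ico a b, ∀ r, K * f t < r →
      ∃ᶠ z in 𝓝[>] t, (z - t)⁻¹ * (f z - f t) < r := by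
    intro t ht r hr
    obtain ⟨y, hy, hyd⟩ := hS.exists_infDist_eq_dist hne (c t)
    have hB := frequently_infDist_le_of_hasDerivWithinAt hV (hc' t ht) (hVS y hy)
      (ε := (r - K * f t) / 2) (by linarith)
    refine (tendsto_const_add_nhdsGT t).frequently
      ((hB.and_eventually self_mem_nhdsWithin).mono ?_)
    rintro h ⟨hle, hpos⟩
    rw [add_sub_cancel_left, inv_mul_lt_iff₀ hpos]
    simp only [f, ← hyd] at hle hr ⊢
    nlinarith
  have hgronwall := le_gronwallBound_of_liminf_deriv_right_le
    ((continuous_infDist_pt S).comp_continuousOn hc) hdini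
    (le_of_eq (infDist_zero_of_mem ha)) fun _ _ => (add_zero _).ge
  intro t ht
  rw [hS.mem_iff_infDist_zero hne]
  exact le_antisymm ((hgronwall t ht).trans_eq (gronwallBound_ε0_δ0 _ _)) infDist_nonneg

end Nagumo

lemma closure_setOf_lt_zero_eq {X : Type*} [TopologicalSpace X] {g : X → ℝ}
    (hfront : frontier {x | g x < 0} = {x | g x = 0}) :
    closure {x | g x < 0} = {x | g x ≤ 0} := by
  ext x
  simp [closure_eq_self_union_frontier, hfront, le_iff_lt_or_eq]

/-- Nagumo-type forward invariance: let `D` be the closure of a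
`C¹` domain `Ω = {g < 0}` with outer unit normal `n = ∇g/‖∇g‖` on `∂Ω`, and let
`V` be a `C¹` vector field with bounded derivative satisfying `V·n ≤ 0` on the
boundary. Then every solution of `x' = V(x)` starting in `D` stays in `D` for
all `t ≥ 0`. -/
theorem forward_invariance_inward_vector_field
    {N : ℕ}
    (g : EuclideanSpace ℝ (Fin N) → ℝ) (hg : ContDiff ℝ 1 g)
    (Ω : Set (EuclideanSpace ℝ (Fin N))) (hΩ : Ω = {x | g x < 0})
    (hfront : frontier Ω = {x | g x = 0})
    (hgrad : ∀ x ∈ frontier Ω, gradient g x ≠ 0)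
    (n : EuclideanSpace ℝ (Fin N) → EuclideanSpace ℝ (Fin N))
    (hn : ∀ x ∈ frontier Ω, n x = ‖gradient g x‖⁻¹ • gradient g x)
    (D : Set (EuclideanSpace ℝ (Fin N))) (hD : D = closure Ω)
    (V : EuclideanSpace ℝ (Fin N) → EuclideanSpace ℝ (Fin N))
    (hV1 : ContDiff ℝ 1 V) (L : ℝ) (hVderiv : ∀ x, ‖fderiv ℝ V x‖ ≤ L)
    (hVn : ∀ x ∈ frontier Ω, inner ℝ (V x) (n x) ≤ (0 : ℝ)) :
    ∀ x ∈ D, ∀ c : ℝ → EuclideanSpace ℝ (Fin N),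
      c 0 = x → (∀ t ≥ (0 : ℝ), HasDerivAt c (V (c t)) t) →
      ∀ t ≥ (0 : ℝ), c t ∈ D := by
  rintro x hx c rfl hc t ht
  subst hΩ hD
  rw [closure_setOf_lt_zero_eq hfront] at hx ⊢
  rw [hfront] at hgrad hn hVn
  have hLip : LipschitzWith L.toNNReal V :=
    lipschitzWith_of_nnnorm_fderiv_le (hV1.differentiable one_ne_zero)
      fun x => NNReal.le_toNNReal_of_coe_le (hVderiv x)
  have hcontingent : ∀ y ∈ {x | g x ≤ 0}, IsContingentDirection {x | g x ≤ 0} y (V y) := by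
    intro y hy
    rcases (show g y ≤ 0 from hy).lt_or_eq with hlt | hzero
    · exact isContingentDirection_of_mem_interior (interior_maximal (fun _ h => le_of_lt h)
        (isOpen_lt hg.continuous continuous_const) hlt) _
    · have hinward : ‖gradient g y‖⁻¹ * fderiv ℝ g y (V y) ≤ 0 := by
        simpa [hn y hzero, inner_smul_right, real_inner_comm, inner_gradient_left]
          using hVn y hzero
      refine isContingentDirection_setOf_le_zero ((hg.differentiable one_ne_zero y).hasFDerivAt)
        hy (fun h => hgrad y hzero (by simp [gradient, h])) ?_
      exact nonpos_of_mul_nonpos_right hinward (inv_pos.2 (norm_pos_iff.2 (hgrad y hzero)))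
  exact ODE_solution_mem_of_forall_isContingentDirection (isClosed_le hg.continuous
    continuous_const) hLip hcontingent (fun τ hτ => (hc τ hτ.1).continuousAt.continuousWithinAt)
    (fun τ hτ => (hc τ hτ.1).hasDerivWithinAt) hx t ⟨ht, le_rfl⟩
end
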